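/- With the notation of the previous statement, |∫_{a}^{a+h} (p(x)q(x) - L(x)) dx| ≤ (1/6) h² ‖p'‖_{L²(a,a+h)} ‖q'‖_{L²(a,a+h)}, where p' and q' are the (constant) derivatives of the affine functions p and q. -/

import Mathlib

/-!
The error `p q - L` is a quadratic vanishing at both endpoints with leading coefficient
`p' q'`, so it equals `p' q' (x - a) (x - a - h)` and integrates to `-p' q' h³ / 6`.
Since `‖p'‖_{L²(a,a+h)} = |p'| √h`, the bound holds with equality.
-/

open intervalIntegral

theorem integral_sub_mul_sub (a b : ℝ) :
    ∫ x in a..b, (x - a) * (x - b) = -(b - a) ^ 3 / 6 := by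
  have hexpand : ∀ x : ℝ, (x - a) * (x - b) = (x - a) ^ 2 - (b - a) * (x - a) := fun x => by
    ring
  simp_rw [hexpand]
  rw [integral_sub ((by fun_prop : Continuous _).intervalIntegrable _ _)
      ((by fun_prop : Continuous _).intervalIntegrable _ _), integral_const_mul,
    integral_comp_sub_right (fun x => x ^ 2), integral_comp_sub_right (fun x => x),
    integral_pow, integral_id]
  ring

theorem sqrt_integral_const_sq {a b : ℝ} (hab : a ≤ b) (c : ℝ) :
    Real.sqrt (∫ _x in a..b, c ^ 2) = |c| * Real.sqrt (b - a) := by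
  rw [integral_const, smul_eq_mul, Real.sqrt_mul (sub_nonneg.2 hab), Real.sqrt_sq_eq_abs,
    mul_comm]

theorem affine_mul_sub_interpolant {a h : ℝ} (hh : h ≠ 0) (p0 p1 q0 q1 x : ℝ) :
    (p0 + (p1 - p0) * (x - a) / h) * (q0 + (q1 - q0) * (x - a) / h)
        - (p0 * q0 + (p1 * q1 - p0 * q0) * (x - a) / h) =
      (p1 - p0) * (q1 - q0) / h ^ 2 * ((x - a) * (x - (a + h))) := by
  field_simp
  ring

/-- On a 1D element `[a, a+h]`, for affine `p, q` with endpoint values and `L`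
the affine interpolant of the product `p q` at the endpoints, the consistency
error is bounded by `(1/6) h² ‖p'‖_{L²(a,a+h)} ‖q'‖_{L²(a,a+h)}`, where the
(constant) derivatives are `p' = (p1-p0)/h`, `q' = (q1-q0)/h`. -/
theorem massLumping_1d_consistency_bound
    (a h p0 p1 q0 q1 : ℝ) (hh : 0 < h)
    (p q L : ℝ → ℝ)
    (hp : ∀ x, p x = p0 + (p1 - p0) * (x - a) / h)
    (hq : ∀ x, q x = q0 + (q1 - q0) * (x - a) / h)
    (hL : ∀ x, L x = p0 * q0 + (p1 * q1 - p0 * q0) * (x - a) / h) :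
    |∫ x in a..(a + h), (p x * q x - L x)| ≤
      (1 / 6) * h ^ 2 *
        Real.sqrt (∫ _x in a..(a + h), ((p1 - p0) / h) ^ 2) *
        Real.sqrt (∫ _x in a..(a + h), ((q1 - q0) / h) ^ 2) := by
  have herror : ∫ x in a..(a + h), (p x * q x - L x) = -((p1 - p0) * (q1 - q0) * h / 6) := by
    simp_rw [hp, hq, hL, affine_mul_sub_interpolant hh.ne', integral_const_mul,
      integral_sub_mul_sub]
    field_simp
    ring
  rw [herror, sqrt_integral_const_sq (by linarith), sqrt_integral_const_sq (by linarith),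
    add_sub_cancel_left, abs_neg, abs_div, abs_div, abs_div, abs_mul, abs_mul, abs_of_pos hh,
    abs_of_pos (by norm_num : (0 : ℝ) < 6)]
  apply le_of_eq
  field_simp
  rw [Real.sq_sqrt hh.le]
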